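/- Every metrizable space is a D-space. -/

import Mathlib

open Set Topology

/-- The core (F) condition for a family `W` assigning to each point a collection of subsets. -/
def FFamilyCondition {X : Type*} [TopologicalSpace X] (W : X → Set (Set X)) : Prop :=
  (∀ x, ∀ w ∈ W x, x ∈ w) ∧
  ∀ x U, IsOpen U → x ∈ U → ∃ V, IsOpen V ∧ x ∈ V ∧
    ∀ y ∈ V, ∃ w ∈ W y, x ∈ w ∧ w ⊆ U

/-- `X` satisfies well-ordered (F): each `W x` is well-ordered by reverse inclusion. -/
def SatisfiesWellOrderedF (X : Type*) [TopologicalSpace X] : Prop :=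
  ∃ W : X → Set (Set X),
    (∀ x, IsWellOrder (W x) (fun A B => (B : Set X) ⊂ (A : Set X))) ∧
    FFamilyCondition W

/-- `X` satisfies chain (F): each `W x` is linearly ordered by (reverse) inclusion. -/
def SatisfiesChainF (X : Type*) [TopologicalSpace X] : Prop :=
  ∃ W : X → Set (Set X),
    (∀ x, IsChain (· ⊆ ·) (W x)) ∧
    FFamilyCondition W

/-- `X` satisfies decreasing (G). -/
def SatisfiesDecreasingG (X : Type*) [TopologicalSpace X] : Prop :=
  ∃ W : X → ℕ → Set X,
    (∀ x k, x ∈ W x k) ∧ (∀ x k, W x (k + 1) ⊆ W x k) ∧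
    ∀ x U, IsOpen U → x ∈ U → ∃ V, IsOpen V ∧ x ∈ V ∧
      ∀ y ∈ V, ∃ m, x ∈ W y m ∧ W y m ⊆ U

universe u_hn

/-- The `H`/`n` characterization with ordinal-valued `n`. -/
def HNAssignment (X : Type u_hn) [TopologicalSpace X] : Prop :=
  ∃ (H : X → Set X → Set X) (n : X → X → Set X → Ordinal.{u_hn}),
    (∀ x U, IsOpen U → x ∈ U → IsOpen (H x U) ∧ x ∈ H x U) ∧
    (∀ a x y U V, IsOpen U → x ∈ U → IsOpen V → y ∈ V →
      a ∈ H x U → a ∈ H y V → n a x U ≤ n a y V → y ∈ U)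

/-- `X` is a D-space: every neighborhood assignment has a closed discrete kernel. -/
def IsDSpace (X : Type*) [TopologicalSpace X] : Prop :=
  ∀ φ : X → Set X, (∀ x, IsOpen (φ x)) → (∀ x, x ∈ φ x) →
    ∃ D : Set X, IsClosed D ∧ DiscreteTopology D ∧ ⋃ d ∈ D, φ d = Set.univ

/-! Build the kernel in stages. At stage `n`, among the points not yet covered whose closed
`2⁻ⁿ`-ball lies in their own neighbourhood, choose (by Zorn) a maximal `2⁻ⁿ`-separated set, and
add the neighbourhoods of the chosen points to the covered part. Every point is eligible from
some stage on, so it is covered either earlier or by a chosen point within distance `2⁻ⁿ`.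
If `x ∈ φ d` with `d` chosen at stage `m`, then `φ d ∩ B(x, 2⁻ᵐ/2)` meets the kernel in finitely
many points: later stages only choose points outside `φ d`, and each stage `k ≤ m` is
`2⁻ᵐ`-separated, hence contributes at most one point. A set meeting some neighbourhood of every
point in a finite set is closed and discrete. -/

open Metric
open scoped NNReal ENNReal

theorem Set.exists_maximal_pairwise_subset {α : Type*} (r : α → α → Prop) (s : Set α) :
    ∃ t, Maximal (fun t => t ⊆ s ∧ t.Pairwise r) t :=
  zorn_subset _ fun c hcs hc =>
    ⟨⋃₀ c, ⟨sUnion_subset fun _ ht => (hcs ht).1, hc.pairwise_sUnion.2 fun _ ht => (hcs ht).2⟩,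
      fun _ => subset_sUnion_of_mem⟩

theorem isClosed_and_isDiscrete_of_finite_inter_nhds {X : Type*} [TopologicalSpace X]
    [T1Space X] {s : Set X} (h : ∀ x, ∃ U ∈ 𝓝 x, (U ∩ s).Finite) :
    IsClosed s ∧ IsDiscrete s := by
  refine isClosed_and_discrete_iff.2 fun x => ?_
  obtain ⟨U, hU, hUs⟩ := h x
  have hV : U \ ((U ∩ s) \ {x}) ∈ 𝓝 x :=
    Filter.sdiff_mem hU (hUs.sdiff.isClosed.compl_mem_nhds (by simp))
  rw [Filter.disjoint_principal_right]
  filter_upwards [nhdsWithin_le_nhds hV, self_mem_nhdsWithin] with y hyV hyx hys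
  exact hyV.2 ⟨⟨hyV.1, hys⟩, hyx⟩

theorem Metric.IsSeparated.subsingleton_inter_eball {X : Type*} [PseudoEMetricSpace X]
    {ε : ℝ≥0∞} {s : Set X} (hs : IsSeparated ε s) (x : X) :
    (s ∩ eball x (ε / 2)).Subsingleton := by
  rintro a ⟨has, hax⟩ b ⟨hbs, hbx⟩
  by_contra hab
  have hlt : edist a b < ε :=
    calc edist a b ≤ edist a x + edist x b := edist_triangle a x b
      _ < ε / 2 + ε / 2 := ENNReal.add_lt_add (mem_eball.1 hax) (mem_eball'.1 hbx)
      _ = ε := ENNReal.add_halves ε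
  exact (hs has hbs hab).not_gt hlt

namespace NeighborhoodAssignment

variable {X : Type*} [EMetricSpace X] (φ : X → Set X)

noncomputable def radius (n : ℕ) : ℝ≥0 := 2⁻¹ ^ n

theorem radius_pos (n : ℕ) : 0 < radius n :=
  pow_pos (by norm_num) n

theorem radius_antitone : Antitone radius :=
  fun _ _ hmn => pow_le_pow_of_le_one (by norm_num) (by norm_num) hmn

theorem exists_radius_lt {ε : ℝ≥0∞} (hε : ε ≠ 0) : ∃ n, (radius n : ℝ≥0∞) < ε := by
  obtain ⟨n, hn⟩ := ENNReal.exists_inv_two_pow_lt hε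
  exact ⟨n, by rwa [radius, ENNReal.coe_pow, ENNReal.coe_inv_two]⟩

def candidates (C : Set X) (n : ℕ) : Set X := {x | closedEBall x (radius n) ⊆ φ x} \ C

noncomputable def pick (C : Set X) (n : ℕ) : Set X :=
  (Set.exists_maximal_pairwise_subset (fun a b => (radius n : ℝ≥0∞) < edist a b)
    (candidates φ C n)).choose

theorem maximal_pick (C : Set X) (n : ℕ) :
    Maximal (fun N => N ⊆ candidates φ C n ∧ IsSeparated (radius n) N) (pick φ C n) :=
  (Set.exists_maximal_pairwise_subset _ _).choose_spec

noncomputable def covered : ℕ → Set X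
  | 0 => ∅
  | n + 1 => covered n ∪ ⋃ d ∈ pick φ (covered n) n, φ d

noncomputable def layer (n : ℕ) : Set X := pick φ (covered φ n) n

def kernel : Set X := ⋃ n, layer φ n

theorem covered_mono : Monotone (covered φ) :=
  monotone_nat_of_le_succ fun _ => subset_union_left

theorem layer_subset (n : ℕ) : layer φ n ⊆ candidates φ (covered φ n) n :=
  (maximal_pick φ _ n).prop.1

theorem isSeparated_layer (n : ℕ) : IsSeparated (radius n) (layer φ n) :=
  (maximal_pick φ _ n).prop.2

theorem subset_covered_succ {n : ℕ} {d : X} (hd : d ∈ layer φ n) : φ d ⊆ covered φ (n + 1) :=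
  (subset_biUnion_of_mem hd).trans subset_union_right

theorem covered_subset_iUnion_kernel (n : ℕ) : covered φ n ⊆ ⋃ d ∈ kernel φ, φ d := by
  induction n with
  | zero => exact empty_subset _
  | succ n ih =>
    refine union_subset ih (iUnion₂_subset fun d hd => ?_)
    exact subset_biUnion_of_mem (mem_iUnion.2 ⟨n, hd⟩)

theorem iUnion_kernel_eq_univ (hopen : ∀ x, IsOpen (φ x)) (hmem : ∀ x, x ∈ φ x) :
    ⋃ d ∈ kernel φ, φ d = univ := by
  refine eq_univ_of_forall fun x => ?_
  obtain ⟨ε, hε, hball⟩ := EMetric.isOpen_iff.1 (hopen x) x (hmem x)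
  obtain ⟨n, hn⟩ := exists_radius_lt hε.ne'
  by_cases hx : x ∈ covered φ n
  · exact covered_subset_iUnion_kernel φ n hx
  have hcand : x ∈ candidates φ (covered φ n) n :=
    ⟨fun y hy => hball ((mem_closedEBall.1 hy).trans_lt hn), hx⟩
  obtain ⟨d, hd, hxd⟩ := IsCover.of_maximal_isSeparated (maximal_pick φ _ n) hcand
  exact mem_biUnion (mem_iUnion.2 ⟨n, hd⟩) ((layer_subset φ n hd).1 hxd)

theorem finite_inter_kernel {m : ℕ} {d : X} (hd : d ∈ layer φ m) (x : X) :
    (φ d ∩ eball x (radius m / 2) ∩ kernel φ).Finite := by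
  have hsub : φ d ∩ eball x (radius m / 2) ∩ kernel φ ⊆
      ⋃ k ∈ Finset.range (m + 1), layer φ k ∩ eball x (radius m / 2) := by
    rintro y ⟨⟨hyd, hyx⟩, hy⟩
    obtain ⟨k, hk⟩ := mem_iUnion.1 hy
    have hkm : k ≤ m := by
      by_contra! hmk
      exact (layer_subset φ k hk).2 (covered_mono φ hmk (subset_covered_succ φ hd hyd))
    exact mem_biUnion (Finset.mem_range_succ_iff.2 hkm) ⟨hk, hyx⟩
  refine (Set.Finite.biUnion (Finset.range (m + 1)).finite_toSet fun k hk => ?_).subset hsub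
  have hkm : k ≤ m := Finset.mem_range_succ_iff.1 hk
  have hsep : IsSeparated (radius m) (layer φ k) :=
    (isSeparated_layer φ k).anti (by exact_mod_cast radius_antitone hkm)
  exact (hsep.subsingleton_inter_eball x).finite

theorem exists_nhds_finite_inter_kernel (hopen : ∀ x, IsOpen (φ x)) (hmem : ∀ x, x ∈ φ x)
    (x : X) : ∃ U ∈ 𝓝 x, (U ∩ kernel φ).Finite := by
  obtain ⟨d, hd, hxd⟩ := mem_iUnion₂.1 ((iUnion_kernel_eq_univ φ hopen hmem).ge (mem_univ x))
  obtain ⟨m, hdm⟩ := mem_iUnion.1 hd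
  have hball : eball x (radius m / 2) ∈ 𝓝 x := eball_mem_nhds x (by simpa using (radius_pos m).ne')
  exact ⟨_, Filter.inter_mem ((hopen d).mem_nhds hxd) hball, finite_inter_kernel φ hdm x⟩

end NeighborhoodAssignment

theorem EMetricSpace.isDSpace (X : Type*) [EMetricSpace X] : IsDSpace X := by
  intro φ hopen hmem
  obtain ⟨hclosed, hdiscrete⟩ := isClosed_and_isDiscrete_of_finite_inter_nhds
    (NeighborhoodAssignment.exists_nhds_finite_inter_kernel φ hopen hmem)
  exact ⟨_, hclosed, isDiscrete_iff_discreteTopology.1 hdiscrete,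
    NeighborhoodAssignment.iUnion_kernel_eq_univ φ hopen hmem⟩

theorem stmt9 {X : Type*} [TopologicalSpace X] [TopologicalSpace.MetrizableSpace X] :
    IsDSpace X := by
  let _ := TopologicalSpace.metrizableSpaceMetric X
  exact EMetricSpace.isDSpace X
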